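/- arXiv:0901.1492 — 4 statements merged into one kernel-verified Lean document; each statement's English description precedes it below -/
import Mathlib

section
/- For all t with 0 ≤ t ≤ 1, the quantity (1-t) + t·h(1/10) - (1 - 4t/5) - (1-t)·h(1/3) - t·h(1/5) + (1 - 2t/5)·h(1/3) equals (3t/5)·(h(1/3) - (3/2)·h(1/9)), and in particular is nonnegative. -/
/-- Binary entropy function (base-2 logarithm). -/
noncomputable def binEnt (x : ℝ) : ℝ := -x * Real.logb 2 x - (1 - x) * Real.logb 2 (1 - x)

/-
In base-2 logarithms every entropy value involved is affine in `log₂ 3` and `log₂ 5`: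
`h(1/3) = log₂ 3 - 2/3`, `h(1/9) = 2 log₂ 3 - 8/3`, `h(1/5) = log₂ 5 - 8/5` and
`h(1/10) = 1 + log₂ 5 - (9/5) log₂ 3`. Both sides of the identity are then `t (2 - (6/5) log₂ 3)`,
which is nonnegative because `3³ ≤ 2⁵` gives `log₂ 3 ≤ 5/3`.
-/

open Real

theorem binEnt_one_div {n : ℝ} (hn : 1 < n) :
    binEnt (1 / n) = logb 2 n - (n - 1) / n * logb 2 (n - 1) := by
  have hn₀ : n ≠ 0 := by positivity
  have hn₁ : n - 1 ≠ 0 := sub_ne_zero.2 hn.ne'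
  rw [binEnt, one_sub_div hn₀, logb_div hn₁ hn₀, one_div, logb_inv]
  field_simp
  ring

theorem logb_two_two_pow (k : ℕ) : logb 2 (2 ^ k) = k := by
  rw [logb_pow, logb_self_eq_one one_lt_two, mul_one]

theorem logb_two_nine : logb 2 9 = 2 * logb 2 3 := by
  rw [show (9 : ℝ) = 3 ^ 2 by norm_num, logb_pow, Nat.cast_ofNat]

theorem logb_two_ten : logb 2 10 = 1 + logb 2 5 := by
  rw [show (10 : ℝ) = 2 * 5 by norm_num, logb_mul two_ne_zero (by norm_num),
    logb_self_eq_one one_lt_two]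

theorem logb_two_three_le : logb 2 3 ≤ 5 / 3 := by
  have h : logb 2 (3 ^ 3) ≤ logb 2 (2 ^ 5) :=
    logb_le_logb_of_le one_lt_two (by norm_num) (by norm_num)
  rw [logb_pow, logb_two_two_pow] at h
  push_cast at h
  linarith

theorem binEnt_one_third : binEnt (1 / 3) = logb 2 3 - 2 / 3 := by
  rw [binEnt_one_div (by norm_num), show (3 : ℝ) - 1 = 2 ^ 1 by norm_num, logb_two_two_pow]
  norm_num

theorem binEnt_one_fifth : binEnt (1 / 5) = logb 2 5 - 8 / 5 := by
  rw [binEnt_one_div (by norm_num), show (5 : ℝ) - 1 = 2 ^ 2 by norm_num, logb_two_two_pow]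
  norm_num

theorem binEnt_one_ninth : binEnt (1 / 9) = 2 * logb 2 3 - 8 / 3 := by
  rw [binEnt_one_div (by norm_num), show (9 : ℝ) - 1 = 2 ^ 3 by norm_num, logb_two_two_pow,
    logb_two_nine]
  norm_num

theorem binEnt_one_tenth : binEnt (1 / 10) = 1 + logb 2 5 - 9 / 5 * logb 2 3 := by
  rw [binEnt_one_div (by norm_num), show (10 : ℝ) - 1 = 9 by norm_num, logb_two_nine,
    logb_two_ten]
  ring

theorem three_halves_binEnt_one_ninth_le : 3 / 2 * binEnt (1 / 9) ≤ binEnt (1 / 3) := by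
  rw [binEnt_one_ninth, binEnt_one_third]
  linarith [logb_two_three_le]

theorem stmt_1_general (t : ℝ) (h0 : 0 ≤ t) :
    (1 - t) + t * binEnt (1/10) - (1 - 4*t/5) - (1 - t) * binEnt (1/3)
        - t * binEnt (1/5) + (1 - 2*t/5) * binEnt (1/3)
      = (3*t/5) * (binEnt (1/3) - (3/2) * binEnt (1/9)) ∧
    0 ≤ (1 - t) + t * binEnt (1/10) - (1 - 4*t/5) - (1 - t) * binEnt (1/3)
        - t * binEnt (1/5) + (1 - 2*t/5) * binEnt (1/3) := by
  have identity : (1 - t) + t * binEnt (1/10) - (1 - 4*t/5) - (1 - t) * binEnt (1/3)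
      - t * binEnt (1/5) + (1 - 2*t/5) * binEnt (1/3)
        = (3*t/5) * (binEnt (1/3) - (3/2) * binEnt (1/9)) := by
    rw [binEnt_one_tenth, binEnt_one_fifth, binEnt_one_ninth, binEnt_one_third]
    ring
  exact ⟨identity, identity ▸
    mul_nonneg (by positivity) (sub_nonneg.2 three_halves_binEnt_one_ninth_le)⟩

theorem stmt_1 (t : ℝ) (h0 : 0 ≤ t) (h1 : t ≤ 1) :
    (1 - t) + t * binEnt (1/10) - (1 - 4*t/5) - (1 - t) * binEnt (1/3)
        - t * binEnt (1/5) + (1 - 2*t/5) * binEnt (1/3)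
      = (3*t/5) * (binEnt (1/3) - (3/2) * binEnt (1/9)) ∧
    0 ≤ (1 - t) + t * binEnt (1/10) - (1 - 4*t/5) - (1 - t) * binEnt (1/3)
        - t * binEnt (1/5) + (1 - 2*t/5) * binEnt (1/3) :=
  stmt_1_general t h0
end

section
/- Suppose p₀₀, p₀₁, p₁₀, p₁₁ > 0 satisfy p₀₀/p₀₁ = (p₀₀ + p₁₀)/(p₀₁ + p₁₁/2) and p₀₀/p₁₀ = (p₀₀ + p₀₁)/√(p₁₀(p₁₀ + 2p₁₁)). Then p₀₁/p₀₀ = 2 and p₁₁/p₁₀ = 4. -/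
/-!
In terms of the ratios `a = p₀₁ / p₀₀` and `b = p₁₁ / p₁₀`, the first equation says `b = 2 a` and
the second says `√(1 + 2 b) = 1 + a`. Hence `1 + 4 a = (1 + a) ^ 2`, i.e. `a (a - 2) = 0`, so
`a = 2` and `b = 4`.
-/

namespace BSSC

variable {p00 p01 p10 p11 : ℝ}

lemma ratio_eq_two_mul_ratio (h00 : 0 < p00) (h01 : 0 < p01) (h10 : 0 < p10)
    (heq : p00 / p01 = (p00 + p10) / (p01 + p11 / 2)) :
    p11 / p10 = 2 * (p01 / p00) := by
  have hden : p01 + p11 / 2 ≠ 0 := by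
    intro h
    rw [h, div_zero] at heq
    exact (div_pos h00 h01).ne' heq
  rw [div_eq_div_iff h01.ne' hden] at heq
  field_simp
  linarith

lemma sqrt_one_add_two_mul_ratio (h00 : 0 < p00) (h10 : 0 < p10)
    (heq : p00 / p10 = (p00 + p01) / √(p10 * (p10 + 2 * p11))) :
    √(1 + 2 * (p11 / p10)) = 1 + p01 / p00 := by
  have hfactor : √(p10 * (p10 + 2 * p11)) = p10 * √(1 + 2 * (p11 / p10)) := by
    rw [← Real.sqrt_sq h10.le, ← Real.sqrt_mul (sq_nonneg _), Real.sqrt_sq h10.le]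
    congr 1
    field_simp
  have hs : √(1 + 2 * (p11 / p10)) ≠ 0 := by
    intro h
    rw [hfactor, h, mul_zero, div_zero] at heq
    exact (div_pos h00 h10).ne' heq
  rw [hfactor, div_eq_div_iff h10.ne' (mul_ne_zero h10.ne' hs)] at heq
  rw [one_add_div h00.ne', eq_div_iff h00.ne']
  apply mul_left_cancel₀ h10.ne'
  linarith

lemma eq_two_of_sqrt_one_add_four_mul_eq {a : ℝ} (ha : 0 < a) (h : √(1 + 4 * a) = 1 + a) :
    a = 2 := by
  have hsq : 1 + 4 * a = (1 + a) ^ 2 := by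
    rw [← h, Real.sq_sqrt (by positivity)]
  nlinarith

end BSSC

open BSSC in
theorem stmt_2_general (p00 p01 p10 p11 : ℝ)
    (h00 : 0 < p00) (h01 : 0 < p01) (h10 : 0 < p10)
    (heq1 : p00 / p01 = (p00 + p10) / (p01 + p11 / 2))
    (heq2 : p00 / p10 = (p00 + p01) / Real.sqrt (p10 * (p10 + 2 * p11))) :
    p01 / p00 = 2 ∧ p11 / p10 = 4 := by
  have hb := ratio_eq_two_mul_ratio h00 h01 h10 heq1
  have hsqrt := sqrt_one_add_two_mul_ratio h00 h10 heq2
  rw [hb, ← mul_assoc, show (2 : ℝ) * 2 = 4 by norm_num] at hsqrt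
  have ha := eq_two_of_sqrt_one_add_four_mul_eq (div_pos h01 h00) hsqrt
  exact ⟨ha, by rw [hb, ha]; norm_num⟩

theorem stmt_2 (p00 p01 p10 p11 : ℝ)
    (h00 : 0 < p00) (h01 : 0 < p01) (h10 : 0 < p10) (h11 : 0 < p11)
    (heq1 : p00 / p01 = (p00 + p10) / (p01 + p11 / 2))
    (heq2 : p00 / p10 = (p00 + p01) / Real.sqrt (p10 * (p10 + 2 * p11))) :
    p01 / p00 = 2 ∧ p11 / p10 = 4 :=
  stmt_2_general p00 p01 p10 p11 h00 h01 h10 heq1 heq2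
end

section
/- Let p₀₁, p₁₀, p₁₁ > 0. Then it is not the case that for all reals L₀₁, L₁₀ with p₀₁·L₀₁ + p₁₀·L₁₀ = 0 we have p₀₁·L₀₁² + p₁₀·L₁₀² ≥ p₀₁·L₀₁² + (1/2)·p₁₀·L₁₀² + (1/2)·(p₁₀²/(p₁₀+2p₁₁))·L₁₀² + p₁₀·L₁₀² + (p₀₁²/(p₀₁+p₁₁/2))·L₀₁². In fact there is a choice of (L₀₁, L₁₀) ≠ (0,0) with p₀₁·L₀₁ + p₁₀·L₁₀ = 0 violating the inequality. -/
theorem stmt_6 (p01 p10 p11 : ℝ) (h01 : 0 < p01) (h10 : 0 < p10) (h11 : 0 < p11) :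
    ∃ L01 L10 : ℝ, (L01, L10) ≠ (0, 0) ∧ p01 * L01 + p10 * L10 = 0 ∧
      ¬ (p01 * L01 ^ 2 + p10 * L10 ^ 2 ≥
          p01 * L01 ^ 2 + (1/2) * p10 * L10 ^ 2
            + (1/2) * (p10 ^ 2 / (p10 + 2 * p11)) * L10 ^ 2
            + p10 * L10 ^ 2 + (p01 ^ 2 / (p01 + p11 / 2)) * L01 ^ 2) := by
  refine ⟨-p10, p01, fun h => h01.ne' (Prod.mk.inj h).2, by ring, ?_⟩
  -- The right side exceeds the left by `p10 L10² / 2` plus two nonnegative terms.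
  have h_gap : 0 < p10 * p01 ^ 2 := by positivity
  have h_term10 : 0 ≤ p10 ^ 2 / (p10 + 2 * p11) * p01 ^ 2 := by positivity
  have h_term01 : 0 ≤ p01 ^ 2 / (p01 + p11 / 2) * (-p10) ^ 2 := by positivity
  rw [not_le]
  linarith
end

section
/- Suppose p₀₀, p₀₁, p₁₀, p₁₁ > 0 sum to 1 and for all a, b, c, d ≥ 0 the inequality 0 ≤ ((a-c)/2)·log(p₀₀/(p₀₀+2p₀₁)) + ((d-b)/2)·log(p₁₁/(p₁₁+2p₁₀)) + ((b-a)/2)·log(p₁₀/(p₁₀+2p₀₀)) + ((c-d)/2)·log(p₀₁/(p₀₁+2p₁₁)) holds. Then p₀₀ = p₀₁ = p₁₀ = p₁₁ = 1/4. -/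
/-!
Testing the inequality at the four unit vectors `(a, b, c, d)` gives a cyclic chain of
inequalities between the four logarithms, so they are all equal. Since
`x / (x + 2 y) = 1 / (1 + 2 y / x)`, this says that `p₀₀ → p₀₁ → p₁₁ → p₁₀ → p₀₀` is a
geometric progression of positive reals with some ratio `k` that returns to its start after
four steps; hence `k ^ 4 = 1`, `k = 1`, and all four probabilities are equal.
-/

open Real

lemma eq_of_cyclic_form_nonneg {x y z w : ℝ}
    (h : ∀ a b c d : ℝ, 0 ≤ a → 0 ≤ b → 0 ≤ c → 0 ≤ d →
      0 ≤ (a - c) / 2 * x + (d - b) / 2 * y + (b - a) / 2 * z + (c - d) / 2 * w) :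
    x = z ∧ z = y ∧ y = w := by
  have hxz := h 1 0 0 0 zero_le_one le_rfl le_rfl le_rfl
  have hzy := h 0 1 0 0 le_rfl zero_le_one le_rfl le_rfl
  have hwx := h 0 0 1 0 le_rfl le_rfl zero_le_one le_rfl
  have hyw := h 0 0 0 1 le_rfl le_rfl le_rfl zero_le_one
  refine ⟨?_, ?_, ?_⟩ <;> linarith

lemma div_eq_div_of_logb_div_add_two_mul_eq {b x y u v : ℝ} (hb : 1 < b)
    (hx : 0 < x) (hy : 0 < y) (hu : 0 < u) (hv : 0 < v)
    (h : logb b (x / (x + 2 * y)) = logb b (u / (u + 2 * v))) :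
    y / x = v / u := by
  have hxy : x / (x + 2 * y) = u / (u + 2 * v) :=
    logb_injOn_pos hb (by simp only [Set.mem_Ioi]; positivity)
      (by simp only [Set.mem_Ioi]; positivity) h
  have hinv := congrArg (·⁻¹) hxy
  simp only [inv_div, add_div, div_self hx.ne', div_self hu.ne', mul_div_assoc] at hinv
  linarith

lemma eq_of_div_eq_div_cycle {x₀ x₁ x₂ x₃ : ℝ}
    (h₀ : 0 < x₀) (h₁ : 0 < x₁) (h₂ : 0 < x₂) (h₃ : 0 < x₃)
    (h₁₀₃ : x₁ / x₀ = x₀ / x₃) (h₀₃₂ : x₀ / x₃ = x₃ / x₂) (h₃₂₁ : x₃ / x₂ = x₂ / x₁) :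
    x₀ = x₁ ∧ x₀ = x₂ ∧ x₀ = x₃ := by
  have hpow : (x₁ / x₀) ^ 4 = 1 :=
    calc (x₁ / x₀) ^ 4 = (x₁ / x₀) * (x₀ / x₃) * (x₃ / x₂) * (x₂ / x₁) := by
          rw [← h₃₂₁, ← h₀₃₂, ← h₁₀₃]; ring
      _ = 1 := by field_simp
  have hk : x₁ / x₀ = 1 := (pow_eq_one_iff_of_nonneg (by positivity) (by norm_num)).1 hpow
  have e₀₁ : x₁ = x₀ := (div_eq_one_iff_eq h₀.ne').1 hk
  have e₃₀ : x₀ = x₃ := (div_eq_one_iff_eq h₃.ne').1 (h₁₀₃ ▸ hk)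
  have e₂₃ : x₃ = x₂ := (div_eq_one_iff_eq h₂.ne').1 (h₀₃₂ ▸ h₁₀₃ ▸ hk)
  exact ⟨e₀₁.symm, e₃₀.trans e₂₃, e₃₀⟩

theorem stmt_9 (p00 p01 p10 p11 : ℝ)
    (h00 : 0 < p00) (h01 : 0 < p01) (h10 : 0 < p10) (h11 : 0 < p11)
    (hsum : p00 + p01 + p10 + p11 = 1)
    (hineq : ∀ a b c d : ℝ, 0 ≤ a → 0 ≤ b → 0 ≤ c → 0 ≤ d →
      0 ≤ ((a - c) / 2) * Real.logb 2 (p00 / (p00 + 2 * p01))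
        + ((d - b) / 2) * Real.logb 2 (p11 / (p11 + 2 * p10))
        + ((b - a) / 2) * Real.logb 2 (p10 / (p10 + 2 * p00))
        + ((c - d) / 2) * Real.logb 2 (p01 / (p01 + 2 * p11))) :
    p00 = 1/4 ∧ p01 = 1/4 ∧ p10 = 1/4 ∧ p11 = 1/4 := by
  obtain ⟨h13, h32, h24⟩ := eq_of_cyclic_form_nonneg hineq
  have hb : (1 : ℝ) < 2 := one_lt_two
  obtain ⟨hp01, hp11, hp10⟩ := eq_of_div_eq_div_cycle h00 h01 h11 h10
    (div_eq_div_of_logb_div_add_two_mul_eq hb h00 h01 h10 h00 h13)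
    (div_eq_div_of_logb_div_add_two_mul_eq hb h10 h00 h11 h10 h32)
    (div_eq_div_of_logb_div_add_two_mul_eq hb h11 h10 h01 h11 h24)
  refine ⟨?_, ?_, ?_, ?_⟩ <;> linarith
end
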